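/- arXiv:2601.19591 — 4 statements merged into one kernel-verified Lean document; each statement's English description precedes it below -/
import Mathlib

section
/- Let d ≥ 1 be an integer, α ∈ (0,1), and c3, c4, c6 ≥ 0. Let f : ℝ^d × ℝ^{d×d}_sym → [0,+∞) satisfy f(x,A) ≤ c3·|A| + c4 for every x ∈ ℝ^d and A ∈ ℝ^{d×d}_sym. Then the following two conditions are equivalent: (i) for every x ∈ ℝ^d, A ∈ ℝ^{d×d}_sym, and s, t > 0 one has |f(x,sA)/s − f(x,tA)/t| ≤ (c6/s)·f(x,sA)^{1−α} + c6/s + (c6/t)·f(x,tA)^{1−α} + c6/t; (ii) for every x ∈ ℝ^d and A ∈ ℝ^{d×d}_sym the limit lim_{t→+∞} f(x,tA)/t exists (and thus equals f^∞(x,A)), and for every t > 0 one has |f(x,tA)/t − f^∞(x,A)| ≤ c6/t + (c6/t)·f(x,tA)^{1−α}. -/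
open Filter

/-- The Frobenius norm of a `d × d` real matrix. -/
noncomputable def frob {d : ℕ} (A : Matrix (Fin d) (Fin d) ℝ) : ℝ :=
  Real.sqrt (∑ i, ∑ j, (A i j) ^ 2)

/-- The recession function (with respect to the matrix variable):
`f^∞(x,A) := limsup_{t→+∞} f(x, tA)/t`. -/
noncomputable def recession {d : ℕ}
    (f : (Fin d → ℝ) → Matrix (Fin d) (Fin d) ℝ → ℝ)
    (x : Fin d → ℝ) (A : Matrix (Fin d) (Fin d) ℝ) : ℝ :=
  Filter.limsup (fun t : ℝ => f x (t • A) / t) Filter.atTop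

lemma frob_nonneg {d : ℕ} (A : Matrix (Fin d) (Fin d) ℝ) : 0 ≤ frob A :=
  Real.sqrt_nonneg _

lemma frob_smul {d : ℕ} (t : ℝ) (A : Matrix (Fin d) (Fin d) ℝ) :
    frob (t • A) = |t| * frob A := by
  unfold frob
  rw [← Real.sqrt_sq_eq_abs, ← Real.sqrt_mul (sq_nonneg t)]
  congr 1
  simp [Matrix.smul_apply, mul_pow, Finset.mul_sum]

/-- condition (f4) is equivalent to the existence of the limit defining the
recession function together with the quantified convergence rate. -/
theorem f4_iff_recession_rate {d : ℕ} (hd : 1 ≤ d) (α c3 c4 c6 : ℝ)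
    (hα0 : 0 < α) (hα1 : α < 1) (hc3 : 0 ≤ c3) (hc4 : 0 ≤ c4) (hc6 : 0 ≤ c6)
    (f : (Fin d → ℝ) → Matrix (Fin d) (Fin d) ℝ → ℝ)
    (hf0 : ∀ x A, A.IsSymm → 0 ≤ f x A)
    (hub : ∀ x A, A.IsSymm → f x A ≤ c3 * frob A + c4) :
    (∀ (x : Fin d → ℝ) (A : Matrix (Fin d) (Fin d) ℝ), A.IsSymm →
        ∀ s t : ℝ, 0 < s → 0 < t →
          |f x (s • A) / s - f x (t • A) / t| ≤
            c6 / s * f x (s • A) ^ (1 - α) + c6 / s +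
              c6 / t * f x (t • A) ^ (1 - α) + c6 / t)
    ↔
    (∀ (x : Fin d → ℝ) (A : Matrix (Fin d) (Fin d) ℝ), A.IsSymm →
        Filter.Tendsto (fun t : ℝ => f x (t • A) / t) Filter.atTop
          (nhds (recession f x A)) ∧
        ∀ t : ℝ, 0 < t →
          |f x (t • A) / t - recession f x A| ≤
            c6 / t + c6 / t * f x (t • A) ^ (1 - α)) := by
  constructor
  · intro h4 x A hA
    set g : ℝ → ℝ := fun t => f x (t • A) / t with hgdef
    set ε : ℝ → ℝ := fun t => c6 / t * f x (t • A) ^ (1 - α) + c6 / t with hεdef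
    have hsym : ∀ t : ℝ, (t • A).IsSymm := fun t => hA.smul t
    have hfnn : ∀ t : ℝ, 0 ≤ f x (t • A) := fun t => hf0 x _ (hsym t)
    set C : ℝ := c3 * frob A + c4 with hCdef
    have hC0 : 0 ≤ C := by
      rw [hCdef]; exact add_nonneg (mul_nonneg hc3 (frob_nonneg A)) hc4
    have hfle : ∀ t : ℝ, 1 ≤ t → f x (t • A) ≤ t * C := by
      intro t ht
      have := hub x (t • A) (hsym t)
      rw [frob_smul, abs_of_pos (by linarith : (0:ℝ) < t)] at this
      have h1 : c3 * (t * frob A) + c4 ≤ t * C := by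
        rw [hCdef]; nlinarith [frob_nonneg A]
      linarith
    -- ε tends to 0
    have hεnn : ∀ t : ℝ, 0 < t → 0 ≤ ε t := by
      intro t ht
      have h1 : 0 ≤ c6 / t := by positivity
      have h2 : 0 ≤ f x (t • A) ^ (1 - α) := Real.rpow_nonneg (hfnn t) _
      exact add_nonneg (mul_nonneg h1 h2) h1
    have hεlim : Tendsto ε atTop (nhds 0) := by
      have hterm2 : Tendsto (fun t : ℝ => c6 / t) atTop (nhds 0) :=
        Tendsto.div_atTop tendsto_const_nhds tendsto_id
      have hterm1 : Tendsto (fun t : ℝ => c6 / t * f x (t • A) ^ (1 - α)) atTop (nhds 0) := by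
        apply squeeze_zero' (g := fun t : ℝ => c6 * C ^ (1 - α) * t ^ (-α))
        · filter_upwards [eventually_ge_atTop (1:ℝ)] with t ht
          have := Real.rpow_nonneg (hfnn t) (1 - α)
          positivity
        · filter_upwards [eventually_ge_atTop (1:ℝ)] with t ht
          have ht0 : (0:ℝ) < t := by linarith
          have h1 : f x (t • A) ^ (1 - α) ≤ (t * C) ^ (1 - α) :=
            Real.rpow_le_rpow (hfnn t) (hfle t ht) (by linarith)
          have h2 : (t * C) ^ (1 - α) = t ^ (1 - α) * C ^ (1 - α) :=
            Real.mul_rpow (le_of_lt ht0) hC0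
          have h3 : c6 / t * (t ^ (1 - α) * C ^ (1 - α)) = c6 * C ^ (1 - α) * t ^ (-α) := by
            have h4 : t ^ (-α) = t ^ (1 - α) / t := by
              rw [show -α = (1 - α) - 1 by ring, Real.rpow_sub ht0, Real.rpow_one]
            rw [h4]; ring
          calc c6 / t * f x (t • A) ^ (1 - α)
              ≤ c6 / t * (t ^ (1 - α) * C ^ (1 - α)) := by
                rw [← h2]; exact mul_le_mul_of_nonneg_left h1 (by positivity)
            _ = c6 * C ^ (1 - α) * t ^ (-α) := h3
        · simpa using (tendsto_rpow_neg_atTop hα0).const_mul (c6 * C ^ (1 - α))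
      simpa using hterm1.add hterm2
    have hcau : ∀ s t : ℝ, 0 < s → 0 < t → |g s - g t| ≤ ε s + ε t := by
      intro s t hs ht
      have := h4 x A hA s t hs ht
      simp only [hgdef, hεdef]
      linarith
    have hrec : recession f x A = limsup g atTop := rfl
    have hg_app : ∀ t : ℝ, g t = f x (t • A) / t := fun t => by rw [hgdef]
    clear_value g ε C
    -- boundedness
    have hbdd_above : IsBoundedUnder (· ≤ ·) atTop g := by
      refine ⟨C, ?_⟩
      rw [eventually_map]
      filter_upwards [eventually_ge_atTop (1:ℝ)] with t ht
      have ht0 : (0:ℝ) < t := by linarith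
      have := hfle t ht
      rw [hg_app t, div_le_iff₀ ht0]
      linarith
    have hbdd_below : IsBoundedUnder (· ≥ ·) atTop g := by
      refine ⟨0, ?_⟩
      rw [eventually_map]
      filter_upwards [eventually_gt_atTop (0:ℝ)] with t ht
      rw [hg_app t]
      exact div_nonneg (hfnn t) (le_of_lt ht)
    have hcob_le : IsCoboundedUnder (· ≤ ·) atTop g := hbdd_below.isCoboundedUnder_le
    have hcob_ge : IsCoboundedUnder (· ≥ ·) atTop g := hbdd_above.isCoboundedUnder_ge
    -- limsup ≤ liminf
    have hkey : limsup g atTop ≤ liminf g atTop := by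
      apply le_of_forall_pos_le_add
      intro δ hδ
      have hδ4 : 0 < δ / 4 := by linarith
      have hev : ∀ᶠ t : ℝ in atTop, ε t < δ / 4 ∧ 0 < t := by
        exact (hεlim.eventually (eventually_lt_nhds hδ4)).and (eventually_gt_atTop 0)
      obtain ⟨t0, ht0⟩ := hev.exists
      have h1 : ∀ᶠ s : ℝ in atTop, g s ≤ g t0 + δ / 2 := by
        filter_upwards [hev] with s hs
        have := hcau s t0 hs.2 ht0.2
        have := abs_le.1 this
        linarith [hs.1, ht0.1, this.2]
      have h2 : ∀ᶠ s : ℝ in atTop, g t0 - δ / 2 ≤ g s := by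
        filter_upwards [hev] with s hs
        have := hcau s t0 hs.2 ht0.2
        have := abs_le.1 this
        linarith [hs.1, ht0.1, this.1]
      have hs1 : limsup g atTop ≤ g t0 + δ / 2 := limsup_le_of_le hcob_le h1
      have hs2 : g t0 - δ / 2 ≤ liminf g atTop := le_liminf_of_le hcob_ge h2
      linarith
    have hinf_eq : liminf g atTop = limsup g atTop :=
      le_antisymm (liminf_le_limsup hbdd_above hbdd_below) hkey
    have htend : Tendsto g atTop (nhds (limsup g atTop)) :=
      tendsto_of_liminf_eq_limsup hinf_eq rfl hbdd_above hbdd_below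
    refine ⟨by rw [hrec]; exact htend, ?_⟩
    intro t ht
    have lim1 : Tendsto (fun s : ℝ => |g s - g t|) atTop (nhds |limsup g atTop - g t|) :=
      (htend.sub_const (g t)).abs
    have lim2 : Tendsto (fun s : ℝ => ε s + ε t) atTop (nhds (0 + ε t)) :=
      hεlim.add_const (ε t)
    have hle : |limsup g atTop - g t| ≤ 0 + ε t := by
      refine le_of_tendsto_of_tendsto lim1 lim2 ?_
      filter_upwards [eventually_gt_atTop (0:ℝ)] with s hs
      exact hcau s t hs ht
    have hεt : ε t = c6 / t * f x (t • A) ^ (1 - α) + c6 / t := by rw [hεdef]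
    rw [hrec, ← hg_app t, abs_sub_comm]
    linarith
  · intro h x A hA s t hs ht
    obtain ⟨_, hrate⟩ := h x A hA
    have h1 := hrate s hs
    have h2 := hrate t ht
    have h3 : |f x (s • A) / s - f x (t • A) / t| ≤
        |f x (s • A) / s - recession f x A| + |recession f x A - f x (t • A) / t| :=
      abs_sub_le _ _ _
    rw [abs_sub_comm (recession f x A)] at h3
    linarith
end

section
/- Let d ≥ 1 be an integer and let 0 < c1 ≤ c3 and c7 ≥ 0. Let g : ℝ^d × ℝ^d × S^{d−1} → [0,+∞) satisfy condition (g3) with constants c1, c3 and condition (g5) with constant c7. Then for every x, ζ ∈ ℝ^d and ν ∈ S^{d−1} the limit g^∞(x,ζ,ν) := lim_{t→+∞} g(x,tζ,ν)/t exists in ℝ, and c1·|ζ⊙ν| ≤ g^∞(x,ζ,ν) ≤ c3·|ζ⊙ν|. -/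
open Filter

/-- The Euclidean norm of a vector in `ℝ^d`. -/
noncomputable def enorm' {d : ℕ} (v : Fin d → ℝ) : ℝ :=
  Real.sqrt (∑ i, (v i) ^ 2)

/-- The Frobenius norm `|ζ ⊙ ν|` of the symmetric tensor product
`(ζ ⊙ ν)_{ij} = (ζ_i ν_j + ζ_j ν_i)/2`. -/
noncomputable def symFrob {d : ℕ} (ζ ν : Fin d → ℝ) : ℝ :=
  Real.sqrt (∑ i, ∑ j, ((ζ i * ν j + ζ j * ν i) / 2) ^ 2)

lemma symFrob_smul {d : ℕ} (t : ℝ) (ht : 0 ≤ t) (ζ ν : Fin d → ℝ) :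
    symFrob (t • ζ) ν = t * symFrob ζ ν := by
  unfold symFrob
  have h : (∑ i, ∑ j, (((t • ζ) i * ν j + (t • ζ) j * ν i) / 2) ^ 2) =
      t ^ 2 * ∑ i, ∑ j, ((ζ i * ν j + ζ j * ν i) / 2) ^ 2 := by
    rw [Finset.mul_sum]
    refine Finset.sum_congr rfl fun i _ => ?_
    rw [Finset.mul_sum]
    refine Finset.sum_congr rfl fun j _ => ?_
    simp only [Pi.smul_apply, smul_eq_mul]
    ring
  rw [h, Real.sqrt_mul (sq_nonneg t), Real.sqrt_sq ht]

/-- under (g3) and (g5) the limit `g^∞(x,ζ,ν) := lim_{t→∞} g(x,tζ,ν)/t`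
exists and satisfies `c1·|ζ⊙ν| ≤ g^∞(x,ζ,ν) ≤ c3·|ζ⊙ν|`. -/
theorem ginfty_exists_and_bounds {d : ℕ} (hd : 1 ≤ d) (c1 c3 c7 : ℝ)
    (hc1 : 0 < c1) (hc13 : c1 ≤ c3) (hc7 : 0 ≤ c7)
    (g : (Fin d → ℝ) → (Fin d → ℝ) → (Fin d → ℝ) → ℝ)
    (hg0 : ∀ x ζ ν, enorm' ν = 1 → 0 ≤ g x ζ ν)
    (hg3 : ∀ x ζ ν, enorm' ν = 1 →
      c1 * symFrob ζ ν ≤ g x ζ ν ∧ g x ζ ν ≤ c3 * symFrob ζ ν)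
    (hg5 : ∀ x ζ ν, enorm' ν = 1 → ∀ s t : ℝ, 0 < s → 0 < t →
      |g x (s • ζ) ν / s - g x (t • ζ) ν / t| ≤
        c7 * (g x (s • ζ) ν / s + g x (t • ζ) ν / t) * (1 / s + 1 / t)) :
    ∀ (x ζ ν : Fin d → ℝ), enorm' ν = 1 →
      ∃ l : ℝ, Filter.Tendsto (fun t : ℝ => g x (t • ζ) ν / t) Filter.atTop (nhds l) ∧
        c1 * symFrob ζ ν ≤ l ∧ l ≤ c3 * symFrob ζ ν := by
  intro x ζ ν hν
  set f : ℝ → ℝ := fun t => g x (t • ζ) ν / t with hf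
  set F : ℝ := symFrob ζ ν with hFdef
  have hF0 : 0 ≤ F := Real.sqrt_nonneg _
  have hub : ∀ t : ℝ, 0 < t → f t ≤ c3 * F := by
    intro t ht
    have h := (hg3 x (t • ζ) ν hν).2
    rw [symFrob_smul t ht.le] at h
    rw [hf]
    rw [div_le_iff₀ ht]
    nlinarith
  have hlb : ∀ t : ℝ, 0 < t → c1 * F ≤ f t := by
    intro t ht
    have h := (hg3 x (t • ζ) ν hν).1
    rw [symFrob_smul t ht.le] at h
    rw [hf]
    rw [le_div_iff₀ ht]
    nlinarith
  have hC : Cauchy (Filter.map f atTop) := by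
    rw [Metric.cauchy_iff]
    refine ⟨Filter.map_neBot, fun ε hε => ?_⟩
    set N : ℝ := max 1 (4 * c7 * (c3 * F) / ε + 1) with hNdef
    have hN1 : (1 : ℝ) ≤ N := le_max_left _ _
    have hN0 : 0 < N := lt_of_lt_of_le one_pos hN1
    refine ⟨f '' Set.Ici N, Filter.image_mem_map (Filter.Ici_mem_atTop N), ?_⟩
    rintro _ ⟨s, hs, rfl⟩ _ ⟨t, ht, rfl⟩
    have hs0 : 0 < s := lt_of_lt_of_le hN0 hs
    have ht0 : 0 < t := lt_of_lt_of_le hN0 ht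
    rw [Real.dist_eq]
    have key : |f s - f t| ≤ c7 * (f s + f t) * (1 / s + 1 / t) :=
      hg5 x ζ ν hν s t hs0 ht0
    have hfs := hub s hs0
    have hft := hub t ht0
    have hfs0 : 0 ≤ f s := div_nonneg (hg0 x (s • ζ) ν hν) hs0.le
    have hft0 : 0 ≤ f t := div_nonneg (hg0 x (t • ζ) ν hν) ht0.le
    have h1s : 1 / s ≤ 1 / N := one_div_le_one_div_of_le hN0 hs
    have h1t : 1 / t ≤ 1 / N := one_div_le_one_div_of_le hN0 ht
    have step : c7 * (f s + f t) * (1 / s + 1 / t) ≤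
        c7 * (c3 * F + c3 * F) * (1 / N + 1 / N) := by
      apply mul_le_mul
      · apply mul_le_mul_of_nonneg_left (by linarith) hc7
      · linarith
      · positivity
      · exact mul_nonneg hc7 (by nlinarith)
    have heq : c7 * (c3 * F + c3 * F) * (1 / N + 1 / N) = 4 * c7 * (c3 * F) / N := by
      field_simp; ring
    have hlt : 4 * c7 * (c3 * F) / N < ε := by
      rw [div_lt_iff₀ hN0]
      have hN2 : 4 * c7 * (c3 * F) / ε + 1 ≤ N := le_max_right _ _
      have := mul_le_mul_of_nonneg_left hN2 hε.le
      have hcalc : ε * (4 * c7 * (c3 * F) / ε + 1) = 4 * c7 * (c3 * F) + ε := by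
        field_simp
      nlinarith
    calc |f s - f t| ≤ c7 * (f s + f t) * (1 / s + 1 / t) := key
      _ ≤ c7 * (c3 * F + c3 * F) * (1 / N + 1 / N) := step
      _ = 4 * c7 * (c3 * F) / N := heq
      _ < ε := hlt
  obtain ⟨l, hl⟩ := CompleteSpace.complete hC
  have htend : Tendsto f atTop (nhds l) := hl
  refine ⟨l, htend, ?_, ?_⟩
  · exact ge_of_tendsto htend (Filter.eventually_atTop.mpr ⟨1, fun t ht => hlb t (by linarith)⟩)
  · exact le_of_tendsto htend (Filter.eventually_atTop.mpr ⟨1, fun t ht => hub t (by linarith)⟩)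
end

section
/- Let d ≥ 1 be an integer, 0 < c1 ≤ c3, c7 ≥ 0, and let g : ℝ^d × ℝ^d × S^{d−1} → [0,+∞) satisfy condition (g3) with constants c1, c3 and condition (g5) with constant c7 (so that g^∞(x,ζ,ν) := lim_{t→+∞} g(x,tζ,ν)/t exists for every x, ζ, ν). Then for every x, ζ ∈ ℝ^d, ν ∈ S^{d−1}, and t > 0: |g(x,tζ,ν)/t − g^∞(x,ζ,ν)| ≤ c7·(g(x,tζ,ν)/t + g^∞(x,ζ,ν))·(1/t), and consequently |g(x,tζ,ν)/t − g^∞(x,ζ,ν)| ≤ 2·c3·c7·|ζ⊙ν|/t. -/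
open Filter

/-- quantified estimates on the distance between `g(x,tζ,ν)/t` and
`g^∞(x,ζ,ν)`, obtained from (g3) and (g5). -/
theorem ginfty_rate {d : ℕ} (hd : 1 ≤ d) (c1 c3 c7 : ℝ)
    (hc1 : 0 < c1) (hc13 : c1 ≤ c3) (hc7 : 0 ≤ c7)
    (g : (Fin d → ℝ) → (Fin d → ℝ) → (Fin d → ℝ) → ℝ)
    (ginf : (Fin d → ℝ) → (Fin d → ℝ) → (Fin d → ℝ) → ℝ)
    (hg0 : ∀ x ζ ν, enorm' ν = 1 → 0 ≤ g x ζ ν)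
    (hg3 : ∀ x ζ ν, enorm' ν = 1 →
      c1 * symFrob ζ ν ≤ g x ζ ν ∧ g x ζ ν ≤ c3 * symFrob ζ ν)
    (hg5 : ∀ x ζ ν, enorm' ν = 1 → ∀ s t : ℝ, 0 < s → 0 < t →
      |g x (s • ζ) ν / s - g x (t • ζ) ν / t| ≤
        c7 * (g x (s • ζ) ν / s + g x (t • ζ) ν / t) * (1 / s + 1 / t))
    (hginf : ∀ x ζ ν, enorm' ν = 1 →
      Filter.Tendsto (fun t : ℝ => g x (t • ζ) ν / t) Filter.atTop (nhds (ginf x ζ ν))) :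
    ∀ (x ζ ν : Fin d → ℝ), enorm' ν = 1 → ∀ t : ℝ, 0 < t →
      |g x (t • ζ) ν / t - ginf x ζ ν| ≤
        c7 * (g x (t • ζ) ν / t + ginf x ζ ν) * (1 / t) ∧
      |g x (t • ζ) ν / t - ginf x ζ ν| ≤ 2 * c3 * c7 * symFrob ζ ν / t := by
  intro x ζ ν hν t ht
  -- scaling of symFrob
  have hscale : ∀ s : ℝ, 0 < s → symFrob (s • ζ) ν = s * symFrob ζ ν := by
    intro s hs
    unfold symFrob
    have : ∀ i j : Fin d, (((s • ζ) i * ν j + (s • ζ) j * ν i) / 2) ^ 2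
        = s ^ 2 * ((ζ i * ν j + ζ j * ν i) / 2) ^ 2 := by
      intro i j; simp [Pi.smul_apply, smul_eq_mul]; ring
    simp only [this, ← Finset.mul_sum]
    rw [Real.sqrt_mul (sq_nonneg s), Real.sqrt_sq hs.le]
  have hfrob0 : 0 ≤ symFrob ζ ν := Real.sqrt_nonneg _
  -- bound on f s := g x (s•ζ) ν / s
  have hfle : ∀ s : ℝ, 0 < s → g x (s • ζ) ν / s ≤ c3 * symFrob ζ ν := by
    intro s hs
    have h := (hg3 x (s • ζ) ν hν).2
    rw [hscale s hs] at h
    rw [div_le_iff₀ hs]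
    calc g x (s • ζ) ν ≤ c3 * (s * symFrob ζ ν) := h
    _ = c3 * symFrob ζ ν * s := by ring
  have hf0 : ∀ s : ℝ, 0 < s → 0 ≤ g x (s • ζ) ν / s := fun s hs =>
    div_nonneg (hg0 x (s • ζ) ν hν) hs.le
  -- ginf bounds via limits
  have htend := hginf x ζ ν hν
  have hginfle : ginf x ζ ν ≤ c3 * symFrob ζ ν := by
    refine le_of_tendsto htend ?_
    filter_upwards [eventually_gt_atTop (0:ℝ)] with s hs using hfle s hs
  have hginf0 : 0 ≤ ginf x ζ ν := by
    refine ge_of_tendsto htend ?_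
    filter_upwards [eventually_gt_atTop (0:ℝ)] with s hs using hf0 s hs
  -- first estimate via limit of hg5
  have hmain : |g x (t • ζ) ν / t - ginf x ζ ν| ≤
      c7 * (g x (t • ζ) ν / t + ginf x ζ ν) * (1 / t) := by
    have hF : Tendsto (fun s : ℝ => |g x (t • ζ) ν / t - g x (s • ζ) ν / s|)
        atTop (nhds (|g x (t • ζ) ν / t - ginf x ζ ν|)) :=
      ((tendsto_const_nhds.sub htend).abs)
    have hinv : Tendsto (fun s : ℝ => 1 / s) atTop (nhds 0) := by
      simpa [one_div] using (tendsto_inv_atTop_zero : Tendsto (fun s : ℝ => s⁻¹) atTop (nhds 0))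
    have hG : Tendsto (fun s : ℝ =>
        c7 * (g x (t • ζ) ν / t + g x (s • ζ) ν / s) * (1 / t + 1 / s))
        atTop (nhds (c7 * (g x (t • ζ) ν / t + ginf x ζ ν) * (1 / t + 0))) :=
      (tendsto_const_nhds.mul (tendsto_const_nhds.add htend)).mul
        (tendsto_const_nhds.add hinv)
    have hle := le_of_tendsto_of_tendsto hF hG ?_
    · simpa using hle
    · filter_upwards [eventually_gt_atTop (0:ℝ)] with s hs
      exact hg5 x ζ ν hν t s ht hs
  constructor
  · exact hmain
  · calc |g x (t • ζ) ν / t - ginf x ζ ν|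
        ≤ c7 * (g x (t • ζ) ν / t + ginf x ζ ν) * (1 / t) := hmain
    _ ≤ c7 * (c3 * symFrob ζ ν + c3 * symFrob ζ ν) * (1 / t) := by
        gcongr <;> first
          | exact hfle t ht
          | exact hginfle
    _ = 2 * c3 * c7 * symFrob ζ ν / t := by ring
end

section
/- Let α ∈ (0,1) and c6 > 0, and set C2 := 2·c6 + 2·c6·(2·c6·(1−α))^{(1−α)/α}. Let ε > 0 and let F, I ≥ 0 be real numbers satisfying |ε·F − I| ≤ c6·ε + c6·ε·F^{1−α}. Then ε·F ≤ 2·I + C2·ε, and consequently ε·F ≤ I + c6·ε + c6·ε^α·(2·I + C2·ε)^{1−α}. -/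
/-- the key inequality in the change of variables for the surface term.
If `|ε·F − I| ≤ c6·ε + c6·ε·F^{1−α}`, then with
`C2 := 2·c6 + 2·c6·(2·c6·(1−α))^{(1−α)/α}` one has `ε·F ≤ 2·I + C2·ε` and
`ε·F ≤ I + c6·ε + c6·ε^α·(2·I + C2·ε)^{1−α}`. -/
theorem eps_F_estimate (α c6 : ℝ) (hα0 : 0 < α) (hα1 : α < 1) (hc6 : 0 < c6)
    (ε F I : ℝ) (hε : 0 < ε) (hF : 0 ≤ F) (hI : 0 ≤ I)
    (h : |ε * F - I| ≤ c6 * ε + c6 * ε * F ^ (1 - α)) :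
    ε * F ≤ 2 * I + (2 * c6 + 2 * c6 * (2 * c6 * (1 - α)) ^ ((1 - α) / α)) * ε ∧
    ε * F ≤ I + c6 * ε +
      c6 * ε ^ α *
        (2 * I + (2 * c6 + 2 * c6 * (2 * c6 * (1 - α)) ^ ((1 - α) / α)) * ε) ^ (1 - α) := by
  set K : ℝ := (2 * c6 * (1 - α)) ^ ((1 - α) / α) with hKdef
  have h1α : (0:ℝ) < 1 - α := by linarith
  have hbase : (0:ℝ) < 2 * c6 * (1 - α) := by positivity
  have hK : 0 < K := Real.rpow_pos_of_pos hbase _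
  -- Young-type inequality
  have young : ∀ τ : ℝ, 0 ≤ τ → τ ^ (1 - α) ≤ τ / (2 * c6) + K := by
    intro τ hτ
    set a : ℝ := 1 / (2 * c6 * (1 - α)) with hadef
    have ha : 0 < a := by positivity
    have hKb : K ^ α = (a⁻¹) ^ (1 - α) := by
      have : a⁻¹ = 2 * c6 * (1 - α) := by
        rw [hadef]; field_simp
      rw [hKdef, ← this, ← Real.rpow_mul (le_of_lt (by rw [this]; exact hbase)),
        div_mul_cancel₀ _ hα0.ne']
    have hid : τ ^ (1 - α) = (a * τ) ^ (1 - α) * K ^ α := by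
      rw [hKb, Real.mul_rpow ha.le hτ, mul_assoc, mul_comm (τ ^ (1-α)),
        ← mul_assoc, ← Real.mul_rpow ha.le (inv_nonneg.mpr ha.le)]
      simp [mul_inv_cancel₀ ha.ne']
    have hgm := Real.geom_mean_le_arith_mean2_weighted (by linarith : (0:ℝ) ≤ 1 - α)
      hα0.le (by positivity : (0:ℝ) ≤ a * τ) hK.le (by ring)
    have haτ : (1 - α) * (a * τ) = τ / (2 * c6) := by
      rw [hadef]; field_simp
    have hαK : α * K ≤ K := by nlinarith
    calc τ ^ (1 - α) = (a * τ) ^ (1 - α) * K ^ α := hid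
      _ ≤ (1 - α) * (a * τ) + α * K := hgm
      _ ≤ τ / (2 * c6) + K := by rw [haτ]; linarith
  have hub : ε * F - I ≤ c6 * ε + c6 * ε * F ^ (1 - α) := (abs_le.mp h).2
  have hy := young F hF
  have hmul : c6 * ε * F ^ (1 - α) ≤ ε * F / 2 + c6 * K * ε := by
    have := mul_le_mul_of_nonneg_left hy (by positivity : (0:ℝ) ≤ c6 * ε)
    calc c6 * ε * F ^ (1 - α) ≤ c6 * ε * (F / (2 * c6) + K) := this
      _ = ε * F / 2 + c6 * K * ε := by field_simp
  have part1 : ε * F ≤ 2 * I + (2 * c6 + 2 * c6 * K) * ε := by nlinarith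
  refine ⟨part1, ?_⟩
  have hεF : 0 ≤ ε * F := by positivity
  have hsplit : ε * F ^ (1 - α) = ε ^ α * (ε * F) ^ (1 - α) := by
    rw [Real.mul_rpow hε.le hF, ← mul_assoc, ← Real.rpow_add hε]
    have h1 : α + (1 - α) = 1 := by ring
    rw [h1, Real.rpow_one]
  have hmono : (ε * F) ^ (1 - α) ≤ (2 * I + (2 * c6 + 2 * c6 * K) * ε) ^ (1 - α) :=
    Real.rpow_le_rpow hεF part1 h1α.le
  have htail : c6 * ε * F ^ (1 - α) ≤
      c6 * ε ^ α * (2 * I + (2 * c6 + 2 * c6 * K) * ε) ^ (1 - α) := by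
    calc c6 * ε * F ^ (1 - α) = c6 * (ε * F ^ (1 - α)) := by ring
      _ = c6 * ε ^ α * (ε * F) ^ (1 - α) := by rw [hsplit]; ring
      _ ≤ c6 * ε ^ α * (2 * I + (2 * c6 + 2 * c6 * K) * ε) ^ (1 - α) := by
          apply mul_le_mul_of_nonneg_left hmono (by positivity)
  linarith
end
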